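/- Let N ≥ 1, let E = ℝ^N with the standard Euclidean inner product, let b ∈ E be a fixed vector with c = ‖b‖ and 0 < c < 1, and let g be a real constant with −2 < g < 2. Then the Finsleroid-regular metric function y ↦ K(β(y), q(y)), where β(y) = ⟨b,y⟩ and q(y) = √(‖y‖² − β(y)²), is infinitely differentiable (C^∞) on E \ {0}. -/

import Mathlib

noncomputable def finsH (g : ℝ) : ℝ := Real.sqrt (1 - g ^ 2 / 4)

noncomputable def finsG (g : ℝ) : ℝ := g / finsH g

/-- The characteristic quadratic form `B(b,q) = b² + g·q·b + q²`. -/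
noncomputable def finsB (g b q : ℝ) : ℝ := b ^ 2 + g * q * b + q ^ 2

/-- `L(b,q) = q + (g/2)·b`. -/
noncomputable def finsL (g b q : ℝ) : ℝ := q + (g / 2) * b

/-- The piecewise-defined Finsleroid function `f` on the half-plane `q > 0`. -/
noncomputable def finsF (g b q : ℝ) : ℝ :=
  if 0 < b then -Real.arctan (finsG g / 2) + Real.arctan (finsL g b q / (finsH g * b))
  else if b < 0 then
    Real.pi - Real.arctan (finsG g / 2) + Real.arctan (finsL g b q / (finsH g * b))
  else Real.pi / 2 - Real.arctan (finsG g / 2)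

/-- The Finsleroid-regular metric function `K(b,q) = √(B(b,q))·exp(−(G/2)·f(b,q))`. -/
noncomputable def finsK (g b q : ℝ) : ℝ :=
  Real.sqrt (finsB g b q) * Real.exp (-(finsG g / 2) * finsF g b q)

lemma finsH_pos {g : ℝ} (hg1 : -2 < g) (hg2 : g < 2) : 0 < finsH g :=
  Real.sqrt_pos.2 (by nlinarith)

/-- On the region `L > 0` the function `f` has the single smooth expression
`π/2 − arctan(G/2) − arctan(h·b/L)`. -/
lemma finsF_of_L_pos {g : ℝ} (hg1 : -2 < g) (hg2 : g < 2) {b q : ℝ}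
    (hL : 0 < finsL g b q) :
    finsF g b q = Real.pi / 2 - Real.arctan (finsG g / 2)
      - Real.arctan (finsH g * b / finsL g b q) := by
  have hh := finsH_pos hg1 hg2
  rcases lt_trichotomy b 0 with h | h | h
  · have hbd : finsH g * b < 0 := mul_neg_of_pos_of_neg hh h
    rw [finsF, if_neg (not_lt.2 h.le), if_pos h,
      show finsL g b q / (finsH g * b) = (finsH g * b / finsL g b q)⁻¹ by rw [inv_div],
      Real.arctan_inv_of_neg (div_neg_of_neg_of_pos hbd hL)]
    ring
  · subst h
    simp [finsF]
  · have hbd : 0 < finsH g * b := mul_pos hh h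
    rw [finsF, if_pos h,
      show finsL g b q / (finsH g * b) = (finsH g * b / finsL g b q)⁻¹ by rw [inv_div],
      Real.arctan_inv_of_pos (div_pos hbd hL)]
    ring

/-- for `E = ℝ^N` (`N ≥ 1`), `b` with `0 < ‖b‖ < 1` and a constant
Finsleroid charge `g ∈ (−2,2)`, the Finsleroid-regular metric function
`y ↦ K(β(y), q(y))` with `β(y) = ⟨b,y⟩`, `q(y) = √(‖y‖² − β(y)²)` is `C^∞`
on `E \ {0}`. -/
theorem finsleroid_K_smooth_on_slit (N : ℕ) (hN : 1 ≤ N)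
    (b : EuclideanSpace ℝ (Fin N)) (hc0 : 0 < ‖b‖) (hc1 : ‖b‖ < 1)
    (g : ℝ) (hg1 : -2 < g) (hg2 : g < 2) :
    ContDiffOn ℝ (⊤ : ℕ∞)
      (fun y : EuclideanSpace ℝ (Fin N) =>
        finsK g (inner ℝ b y : ℝ) (Real.sqrt (‖y‖ ^ 2 - (inner ℝ b y : ℝ) ^ 2)))
      {y : EuclideanSpace ℝ (Fin N) | y ≠ 0} := by
  have hh := finsH_pos hg1 hg2
  intro y₀ hy₀
  apply ContDiffAt.contDiffWithinAt
  have hy0 : y₀ ≠ 0 := hy₀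
  -- smoothness of the basic building blocks
  have hβ : ContDiff ℝ (⊤ : WithTop ℕ∞)
      (fun y : EuclideanSpace ℝ (Fin N) => (inner ℝ b y : ℝ)) :=
    contDiff_const.inner ℝ contDiff_id
  have hScd : ContDiff ℝ (⊤ : WithTop ℕ∞)
      (fun y : EuclideanSpace ℝ (Fin N) => ‖y‖ ^ 2 - (inner ℝ b y : ℝ) ^ 2) :=
    (contDiff_norm_sq ℝ).sub (hβ.pow 2)
  have hSpos : 0 < ‖y₀‖ ^ 2 - (inner ℝ b y₀ : ℝ) ^ 2 := by
    have h1 : |(inner ℝ b y₀ : ℝ)| ≤ ‖b‖ * ‖y₀‖ := abs_real_inner_le_norm b y₀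
    have h2 : 0 < ‖y₀‖ := norm_pos_iff.2 hy0
    have h3 : |(inner ℝ b y₀ : ℝ)| < ‖y₀‖ := lt_of_le_of_lt h1 (by nlinarith)
    nlinarith [sq_abs ((inner ℝ b y₀ : ℝ)), abs_nonneg ((inner ℝ b y₀ : ℝ))]
  have hQc : ContDiffAt ℝ (⊤ : WithTop ℕ∞)
      (fun y : EuclideanSpace ℝ (Fin N) =>
        Real.sqrt (‖y‖ ^ 2 - (inner ℝ b y : ℝ) ^ 2)) y₀ :=
    (Real.contDiffAt_sqrt hSpos.ne').comp y₀ hScd.contDiffAt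
  have hQpos : 0 < Real.sqrt (‖y₀‖ ^ 2 - (inner ℝ b y₀ : ℝ) ^ 2) := Real.sqrt_pos.2 hSpos
  set β : EuclideanSpace ℝ (Fin N) → ℝ := fun y => (inner ℝ b y : ℝ) with hβdef
  set Q : EuclideanSpace ℝ (Fin N) → ℝ :=
    fun y => Real.sqrt (‖y‖ ^ 2 - (inner ℝ b y : ℝ) ^ 2) with hQdef
  -- the quadratic form B is positive and smooth
  have hB : ContDiffAt ℝ (⊤ : WithTop ℕ∞) (fun y => finsB g (β y) (Q y)) y₀ := by
    simp only [finsB]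
    exact ((hβ.contDiffAt.pow 2).add
      ((contDiffAt_const.mul hQc).mul hβ.contDiffAt)).add (hQc.pow 2)
  have hBpos : 0 < finsB g (β y₀) (Q y₀) := by
    simp only [finsB]
    nlinarith [sq_nonneg (β y₀ + g / 2 * Q y₀),
      mul_pos (show (0:ℝ) < 1 - g ^ 2 / 4 by nlinarith) (mul_pos hQpos hQpos)]
  -- L is smooth
  have hL : ContDiffAt ℝ (⊤ : WithTop ℕ∞) (fun y => finsL g (β y) (Q y)) y₀ := by
    simp only [finsL]
    exact hQc.add (contDiffAt_const.mul hβ.contDiffAt)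
  -- f is smooth
  have hF : ContDiffAt ℝ (⊤ : WithTop ℕ∞) (fun y => finsF g (β y) (Q y)) y₀ := by
    rcases lt_trichotomy (β y₀) 0 with hb | hb | hb
    · -- β(y₀) < 0
      have hev : ∀ᶠ y in nhds y₀, β y < 0 :=
        (hβ.continuous.continuousAt : Filter.Tendsto β _ _) (gt_mem_nhds hb)
      have hmodel : ContDiffAt ℝ (⊤ : WithTop ℕ∞)
          (fun y => Real.pi - Real.arctan (finsG g / 2)
            + Real.arctan (finsL g (β y) (Q y) / (finsH g * β y))) y₀ :=
        contDiffAt_const.add (Real.contDiff_arctan.contDiffAt.comp y₀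
          (hL.div (contDiffAt_const.mul hβ.contDiffAt)
            (mul_neg_of_pos_of_neg hh hb).ne))
      refine hmodel.congr_of_eventuallyEq ?_
      filter_upwards [hev] with y hy
      simp only [finsF]
      rw [if_neg (not_lt.2 hy.le), if_pos hy]
    · -- β(y₀) = 0 : here L(y₀) = Q(y₀) > 0
      have hLpos : 0 < finsL g (β y₀) (Q y₀) := by
        simp only [finsL, hb, mul_zero, add_zero]; exact hQpos
      have hLcont : Continuous (fun y => finsL g (β y) (Q y)) := by
        simp only [finsL]
        exact (Real.continuous_sqrt.comp hScd.continuous).add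
          (continuous_const.mul hβ.continuous)
      have hev : ∀ᶠ y in nhds y₀, 0 < finsL g (β y) (Q y) :=
        (hLcont.continuousAt : Filter.Tendsto _ _ _) (lt_mem_nhds hLpos)
      have hmodel : ContDiffAt ℝ (⊤ : WithTop ℕ∞)
          (fun y => Real.pi / 2 - Real.arctan (finsG g / 2)
            - Real.arctan (finsH g * β y / finsL g (β y) (Q y))) y₀ :=
        contDiffAt_const.sub (Real.contDiff_arctan.contDiffAt.comp y₀
          ((contDiffAt_const.mul hβ.contDiffAt).div hL hLpos.ne'))
      refine hmodel.congr_of_eventuallyEq ?_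
      filter_upwards [hev] with y hy
      exact finsF_of_L_pos hg1 hg2 hy
    · -- β(y₀) > 0
      have hev : ∀ᶠ y in nhds y₀, 0 < β y :=
        (hβ.continuous.continuousAt : Filter.Tendsto β _ _) (lt_mem_nhds hb)
      have hmodel : ContDiffAt ℝ (⊤ : WithTop ℕ∞)
          (fun y => -Real.arctan (finsG g / 2)
            + Real.arctan (finsL g (β y) (Q y) / (finsH g * β y))) y₀ :=
        contDiffAt_const.add (Real.contDiff_arctan.contDiffAt.comp y₀
          (hL.div (contDiffAt_const.mul hβ.contDiffAt) (mul_pos hh hb).ne'))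
      refine hmodel.congr_of_eventuallyEq ?_
      filter_upwards [hev] with y hy
      simp only [finsF]
      rw [if_pos hy]
  -- assemble K = √B · exp(−(G/2)·f)
  have hgoal : ContDiffAt ℝ (⊤ : WithTop ℕ∞) (fun y => finsK g (β y) (Q y)) y₀ := by
    simp only [finsK]
    exact ((Real.contDiffAt_sqrt hBpos.ne').comp y₀ hB).mul
      (Real.contDiff_exp.contDiffAt.comp y₀ (contDiffAt_const.mul hF))
  exact hgoal.of_le le_top
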